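/- arXiv:2306.00916 — 3 statements merged into one kernel-verified Lean document; each statement's English description precedes it below -/
import Mathlib

section
/- Let n₁, n₂ ≥ 1 be integers with n₁ odd, n₂ > n₁ + 2, and such that C(n₂ − 2, i) is even for every 0 < i < n₂ − 2; set n = n₁ + n₂. Work in A = (ℤ/2)[y₁,y₂] and let I ⊆ A be the ideal generated by y₁^{n₁+1} and y₂·(y₁+y₂)^{n₂}. Then y₁^{n₁}·y₂^{n₂} − y₁·y₂^{n−1} ∈ I (i.e. y₁^{n₁} y₂^{n₂} = y₁ y₂^{n−1} in R = A/I), and y₁·y₂^{n−1} ∉ I (i.e. y₁ y₂^{n−1} ≠ 0 in R); in particular y₂^{n−1} ≠ 0 in R. -/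
/-!
Write `x = X 0`, `y = X 1`, `n₁ = 2m + 1` and `n₂ = N + 2`. Evenness of the middle binomial
coefficients of `N` gives `(x + y)^N = x^N + y^N` in characteristic two, and `x^N ∈ I` since
`N > n₁`, so modulo `I` the second generator reduces to `y^(N+1) (x² + y²)`. Hence
`y^(n₂+1) ≡ x² y^(n₂-1)`, and trading `y²` for `x²` `m` times turns `x y^(n-1)` into
`x^n₁ y^n₂`.

For `x^n₁ y^n₂ ∉ I`, send `x` to a nilpotent `q` of exact order `n₁ + 1` and `y` to the
variable of `Q[X]`: the second generator becomes the monic polynomial `X (X + q)^n₂` of degree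
`n₂ + 1`, which cannot divide the nonzero image `q^n₁ X^n₂` of degree `n₂`.
-/

open MvPolynomial

theorem add_pow_eq_add_pow_of_choose_eq_zero {R : Type*} [CommSemiring R] {N : ℕ} (hN : N ≠ 0)
    (h : ∀ i, 0 < i → i < N → (N.choose i : R) = 0) (x y : R) :
    (x + y) ^ N = x ^ N + y ^ N := by
  rw [add_pow, Finset.sum_range_succ, Finset.sum_eq_single_of_mem 0
    (Finset.mem_range.mpr (Nat.pos_of_ne_zero hN))]
  · simp [add_comm]
  · intro i hi hi0
    rw [h i (Nat.pos_of_ne_zero hi0) (Finset.mem_range.mp hi), mul_zero]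

theorem pow_add_three_eq_sq_mul_pow_add_one {S : Type*} [CommRing S] (h2 : (2 : S) = 0)
    {x y : S} {a N : ℕ} (haN : a < N) (hx : x ^ (a + 1) = 0)
    (hfrob : (x + y) ^ N = x ^ N + y ^ N) (hy : y * (x + y) ^ (N + 2) = 0) :
    y ^ (N + 3) = x ^ 2 * y ^ (N + 1) := by
  have hxN : x ^ N = 0 := pow_eq_zero_of_le haN hx
  have hexpand :
      y * (x + y) ^ (N + 2) = y ^ (N + 3) + x ^ 2 * y ^ (N + 1) + 2 * x * y ^ (N + 2) := by
    rw [pow_add, hfrob, hxN]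
    ring
  linear_combination hy - hexpand - (x * y ^ (N + 2) + x ^ 2 * y ^ (N + 1)) * h2

theorem pow_add_two_mul_eq_of_pow_add_two_eq {M : Type*} [CommMonoid M] {x y : M} {c : ℕ}
    (h : y ^ (c + 2) = x ^ 2 * y ^ c) (j : ℕ) : y ^ (c + 2 * j) = x ^ (2 * j) * y ^ c := by
  induction j with
  | zero => simp
  | succ j ih =>
    calc y ^ (c + 2 * (j + 1)) = y ^ (c + 2) * y ^ (2 * j) := by rw [← pow_add]; ring_nf
      _ = x ^ 2 * y ^ (c + 2 * j) := by rw [h, mul_assoc, ← pow_add]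
      _ = x ^ (2 * (j + 1)) * y ^ c := by rw [ih, ← mul_assoc, ← pow_add]; ring_nf

theorem AdjoinRoot.root_X_pow_succ_pow_self_ne_zero {R : Type*} [CommRing R] [Nontrivial R]
    (a : ℕ) : AdjoinRoot.root (Polynomial.X ^ (a + 1) : Polynomial R) ^ a ≠ 0 := by
  rw [← AdjoinRoot.mk_X, ← map_pow, Ne, AdjoinRoot.mk_eq_zero, Polynomial.X_pow_dvd_iff]
  intro h
  simpa using h a a.lt_succ_self

theorem X_pow_mul_X_pow_notMem_span_of_pow_ne_zero {R Q : Type*} [CommRing R] [CommRing Q]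
    [Algebra R Q] {a : ℕ} (b : ℕ) {q : Q} (hq : q ^ (a + 1) = 0) (hqa : q ^ a ≠ 0) :
    (X 0 : MvPolynomial (Fin 2) R) ^ a * X 1 ^ b
      ∉ Ideal.span {X 0 ^ (a + 1), X 1 * (X 0 + X 1) ^ b} := by
  have : Nontrivial Q := nontrivial_of_ne _ _ hqa
  intro hmem
  obtain ⟨c, d, hcd⟩ := Ideal.mem_span_pair.mp hmem
  let T : Polynomial Q := Polynomial.X
  let φ : MvPolynomial (Fin 2) R →ₐ[R] Polynomial Q := aeval ![Polynomial.C q, T]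
  have hφx : φ (X 0) = Polynomial.C q := by simp [φ]
  have hφy : φ (X 1) = T := by simp [φ]
  have hlin : (T + Polynomial.C q).Monic := Polynomial.monic_X_add_C q
  have hmonic : (T * (T + Polynomial.C q) ^ b).Monic := Polynomial.monic_X.mul (hlin.pow b)
  have himage : φ (X 0 ^ a * X 1 ^ b) = Polynomial.C (q ^ a) * T ^ b := by
    rw [map_mul, map_pow, map_pow, hφx, hφy, Polynomial.C_pow]
  have hdvd : T * (T + Polynomial.C q) ^ b ∣ Polynomial.C (q ^ a) * T ^ b := by
    refine ⟨φ d, ?_⟩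
    rw [← himage, ← hcd, map_add, map_mul, map_mul, map_pow, map_mul, map_pow, map_add, hφx,
      hφy, ← Polynomial.C_pow, hq, Polynomial.C_0, mul_zero, zero_add, mul_comm,
      add_comm (Polynomial.C q)]
  refine hmonic.not_dvd_of_natDegree_lt ?_ ?_ hdvd
  · rw [Polynomial.C_mul_X_pow_eq_monomial, Ne, Polynomial.monomial_eq_zero_iff]
    exact hqa
  · rw [Polynomial.monic_X.natDegree_mul (hlin.pow b), Polynomial.natDegree_X,
      hlin.natDegree_pow, Polynomial.natDegree_X_add_C]
    exact (Polynomial.natDegree_C_mul_le _ _).trans_lt (by simp [T])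

theorem X_pow_mul_X_pow_notMem_span {R : Type*} [CommRing R] [Nontrivial R] (a b : ℕ) :
    (X 0 : MvPolynomial (Fin 2) R) ^ a * X 1 ^ b
      ∉ Ideal.span {X 0 ^ (a + 1), X 1 * (X 0 + X 1) ^ b} :=
  X_pow_mul_X_pow_notMem_span_of_pow_ne_zero b
    (by rw [← AdjoinRoot.mk_X, ← map_pow, AdjoinRoot.mk_self])
    (AdjoinRoot.root_X_pow_succ_pow_self_ne_zero (R := R) a)

theorem stmt_8_general (n₁ n₂ : ℕ) (hodd : Odd n₁)
    (hlt : n₁ + 2 < n₂)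
    (hbin : ∀ i, 0 < i → i < n₂ - 2 → Even ((n₂ - 2).choose i))
    (I : Ideal (MvPolynomial (Fin 2) (ZMod 2)))
    (hI : I = Ideal.span {X 0 ^ (n₁ + 1), X 1 * (X 0 + X 1) ^ n₂}) :
    (X 0 : MvPolynomial (Fin 2) (ZMod 2)) ^ n₁ * X 1 ^ n₂ - X 0 * X 1 ^ (n₁ + n₂ - 1) ∈ I ∧
    (X 0 : MvPolynomial (Fin 2) (ZMod 2)) * X 1 ^ (n₁ + n₂ - 1) ∉ I ∧
    (X 1 : MvPolynomial (Fin 2) (ZMod 2)) ^ (n₁ + n₂ - 1) ∉ I := by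
  obtain ⟨m, rfl⟩ := hodd
  obtain ⟨N, rfl⟩ : ∃ N, n₂ = N + 2 := ⟨n₂ - 2, by omega⟩
  rw [Nat.add_sub_cancel] at hbin
  let π := Ideal.Quotient.mk I
  have h2 : (2 : MvPolynomial (Fin 2) (ZMod 2) ⧸ I) = 0 := by
    have h := congrArg π (CharTwo.two_eq_zero : (2 : MvPolynomial (Fin 2) (ZMod 2)) = 0)
    rwa [map_ofNat, map_zero] at h
  have hx : π (X 0) ^ (2 * m + 1 + 1) = 0 := by
    rw [← map_pow, Ideal.Quotient.eq_zero_iff_mem, hI]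
    exact Ideal.subset_span (by simp)
  have hy : π (X 1) * (π (X 0) + π (X 1)) ^ (N + 2) = 0 := by
    rw [← map_add, ← map_pow, ← map_mul, Ideal.Quotient.eq_zero_iff_mem, hI]
    exact Ideal.subset_span (by simp)
  have hfrob := add_pow_eq_add_pow_of_choose_eq_zero (N := N) (by omega) (fun i hi0 hiN => by
    obtain ⟨k, hk⟩ := hbin i hi0 hiN
    rw [hk, Nat.cast_add, ← two_mul, h2, zero_mul]) (π (X 0)) (π (X 1))
  have hrel := pow_add_three_eq_sq_mul_pow_add_one h2 (by omega) hx hfrob hy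
  have hreduce :
      π (X 0 ^ (2 * m + 1) * X 1 ^ (N + 2)) = π (X 0 * X 1 ^ (2 * m + 1 + (N + 2) - 1)) := by
    have htrade := pow_add_two_mul_eq_of_pow_add_two_eq (c := N + 1) hrel m
    rw [show 2 * m + 1 + (N + 2) - 1 = N + 1 + 2 * m + 1 by omega]
    simp only [map_mul, map_pow]
    rw [pow_succ _ (N + 1 + 2 * m), htrade]
    ring
  have hnotMem : X 0 ^ (2 * m + 1) * X 1 ^ (N + 2) ∉ I := hI ▸ X_pow_mul_X_pow_notMem_span _ _
  have hsecond : X 0 * X 1 ^ (2 * m + 1 + (N + 2) - 1) ∉ I := fun h => hnotMem <| by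
    rwa [← Ideal.Quotient.eq_zero_iff_mem, hreduce, Ideal.Quotient.eq_zero_iff_mem]
  exact ⟨Ideal.Quotient.eq.mp hreduce, hsecond, fun h => hsecond (I.mul_mem_left _ h)⟩

theorem stmt_8 (n₁ n₂ : ℕ) (h₁ : 1 ≤ n₁) (h₂ : 1 ≤ n₂) (hodd : Odd n₁)
    (hlt : n₁ + 2 < n₂)
    (hbin : ∀ i, 0 < i → i < n₂ - 2 → Even ((n₂ - 2).choose i))
    (I : Ideal (MvPolynomial (Fin 2) (ZMod 2)))
    (hI : I = Ideal.span {X 0 ^ (n₁ + 1), X 1 * (X 0 + X 1) ^ n₂}) :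
    (X 0 : MvPolynomial (Fin 2) (ZMod 2)) ^ n₁ * X 1 ^ n₂ - X 0 * X 1 ^ (n₁ + n₂ - 1) ∈ I ∧
    (X 0 : MvPolynomial (Fin 2) (ZMod 2)) * X 1 ^ (n₁ + n₂ - 1) ∉ I ∧
    (X 1 : MvPolynomial (Fin 2) (ZMod 2)) ^ (n₁ + n₂ - 1) ∉ I :=
  stmt_8_general n₁ n₂ hodd hlt hbin I hI
end

section
/- Let n₁, n₂ ≥ 1 be integers, n = n₁ + n₂, and let R = (ℤ/2)[y₁,y₂]/I where I is the ideal generated by y₁^{n₁+1} and y₂·(y₁+y₂)^{n₂}. Suppose y₁·y₂^{n−1} ∉ I, and let r be an integer with n ≤ 2^{r} − 1 ≤ 2n − 2. Then in the tensor product R ⊗_{ℤ/2} R one has (1 ⊗ ȳ₂ + ȳ₂ ⊗ 1)^{2^{r}−1} ≠ 0, where ȳ₂ is the image of y₂ in R. -/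
/-!
The ideal is homogeneous, so each degree projection of `A` descends to `R`, and tensoring two
of them isolates a single term of the binomial expansion of `(1 ⊗ ȳ₂ + ȳ₂ ⊗ 1)^(2^r - 1)`:
projecting onto bidegree `(2^r - n, n - 1)` leaves `C(2^r - 1, n - 1) • ȳ₂^(2^r - n) ⊗ ȳ₂^(n - 1)`.
The coefficient is odd by Lucas' theorem, and the tensor is nonzero because both factors are
nonzero powers of `ȳ₂` (the hypothesis `y₁ y₂^(n-1) ∉ I` gives `ȳ₂^(n-1) ≠ 0`, and
`2^r - n ≤ n - 1`).
-/

open MvPolynomial TensorProduct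

theorem Nat.choose_two_pow_sub_one_mod_two {r k : ℕ} (hk : k ≤ 2 ^ r - 1) :
    (2 ^ r - 1).choose k % 2 = 1 := by
  induction r generalizing k with
  | zero =>
    obtain rfl : k = 0 := by simpa using hk
    rfl
  | succ r ih =>
    have hsucc : 2 ^ (r + 1) - 1 = 2 * (2 ^ r - 1) + 1 := by
      have := Nat.one_le_two_pow (n := r)
      rw [pow_succ]
      omega
    have hk2 : k / 2 ≤ 2 ^ r - 1 := by omega
    have hbit : Nat.choose 1 (k % 2) = 1 := by
      rcases Nat.mod_two_eq_zero_or_one k with h | h <;> simp [h]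
    rw [Choose.choose_modEq_choose_mod_mul_choose_div_nat (p := 2), hsucc,
      Nat.mul_add_mod_self_left, Nat.mul_add_div two_pos, Nat.one_mod, show 1 / 2 = 0 from rfl,
      add_zero, hbit, one_mul]
    exact ih hk2

theorem TensorProduct.tmul_ne_zero {K V W : Type*} [Field K] [AddCommGroup V] [Module K V]
    [AddCommGroup W] [Module K W] {v : V} {w : W} (hv : v ≠ 0) (hw : w ≠ 0) :
    v ⊗ₜ[K] w ≠ 0 := by
  obtain ⟨f, hf⟩ : ∃ f : Module.Dual K V, f v ≠ 0 := by
    by_contra! h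
    exact hv ((Module.forall_dual_apply_eq_zero_iff K v).1 h)
  obtain ⟨g, hg⟩ : ∃ g : Module.Dual K W, g w ≠ 0 := by
    by_contra! h
    exact hw ((Module.forall_dual_apply_eq_zero_iff K w).1 h)
  intro h
  have := congrArg ((TensorProduct.lid K K).toLinearMap ∘ₗ TensorProduct.map f g) h
  simp only [LinearMap.comp_apply, map_tmul, LinearEquiv.coe_coe, lid_tmul, smul_eq_mul,
    map_zero] at this
  exact mul_ne_zero hf hg this

theorem Algebra.TensorProduct.one_tmul_add_tmul_one_pow {K S : Type*} [CommSemiring K]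
    [CommSemiring S] [Algebra K S] (y : S) (m : ℕ) :
    ((1 : S) ⊗ₜ[K] y + y ⊗ₜ[K] 1) ^ m
      = ∑ k ∈ Finset.range (m + 1), m.choose k • ((y ^ (m - k)) ⊗ₜ[K] (y ^ k)) := by
  rw [add_pow]
  refine Finset.sum_congr rfl fun k _ => ?_
  rw [tmul_pow, tmul_pow, one_pow, one_pow, tmul_mul_tmul, one_mul, mul_one, ← nsmul_eq_mul']

section HomogeneousQuotient

variable {R A : Type*} [CommRing R] [CommRing A] [Algebra R A] (𝒜 : ℕ → Submodule R A)
  [GradedAlgebra 𝒜] {I : Ideal A} (hI : I.IsHomogeneous 𝒜)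

def Ideal.IsHomogeneous.quotientProj (i : ℕ) : A ⧸ I →ₗ[R] A ⧸ I :=
  Submodule.liftQ (I.restrictScalars R)
      ((Ideal.Quotient.mkₐ R I).toLinearMap ∘ₗ GradedAlgebra.proj 𝒜 i)
      (fun p hp => by
        simpa [GradedAlgebra.proj_apply, Ideal.Quotient.eq_zero_iff_mem] using hI i hp) ∘ₗ
    (Submodule.Quotient.restrictScalarsEquiv R I).symm.toLinearMap

theorem Ideal.IsHomogeneous.quotientProj_mk_of_mem {i j : ℕ} {p : A} (hp : p ∈ 𝒜 j) :
    hI.quotientProj 𝒜 i (Ideal.Quotient.mk I p) = if i = j then Ideal.Quotient.mk I p else 0 := by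
  change hI.quotientProj 𝒜 i (Submodule.Quotient.mk p) = _
  simp only [Ideal.IsHomogeneous.quotientProj, LinearMap.comp_apply, LinearEquiv.coe_coe,
    Submodule.Quotient.restrictScalarsEquiv_symm_mk, Submodule.liftQ_apply,
    AlgHom.toLinearMap_apply, Ideal.Quotient.mkₐ_eq_mk, GradedAlgebra.proj_apply]
  split_ifs with hij
  · rw [hij, DirectSum.decompose_of_mem_same 𝒜 hp]
  · rw [DirectSum.decompose_of_mem_ne 𝒜 hp (Ne.symm hij), map_zero]

end HomogeneousQuotient

theorem Ideal.IsHomogeneous.one_tmul_add_tmul_one_pow_ne_zero {K A : Type*} [Field K]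
    [CommRing A] [Algebra K A] (𝒜 : ℕ → Submodule K A) [GradedAlgebra 𝒜] {I : Ideal A}
    (hI : I.IsHomogeneous 𝒜) {y : A} (hy : y ∈ 𝒜 1)
    {m b : ℕ} (hbm : b ≤ m) (hchoose : (m.choose b : K) ≠ 0)
    (ha : Ideal.Quotient.mk I y ^ (m - b) ≠ 0) (hb : Ideal.Quotient.mk I y ^ b ≠ 0) :
    ((1 : A ⧸ I) ⊗ₜ[K] Ideal.Quotient.mk I y + Ideal.Quotient.mk I y ⊗ₜ[K] 1) ^ m ≠ 0 := by
  set z := Ideal.Quotient.mk I y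
  have hproj : ∀ i k, hI.quotientProj 𝒜 i (z ^ k) = if i = k then z ^ k else 0 := by
    intro i k
    have hyk : y ^ k ∈ 𝒜 k := by simpa using SetLike.pow_mem_graded k hy
    rw [← map_pow]
    exact hI.quotientProj_mk_of_mem 𝒜 hyk
  have hisolate : TensorProduct.map (hI.quotientProj 𝒜 (m - b)) (hI.quotientProj 𝒜 b)
        (((1 : A ⧸ I) ⊗ₜ[K] z + z ⊗ₜ[K] 1) ^ m)
      = (m.choose b : K) • ((z ^ (m - b)) ⊗ₜ[K] (z ^ b)) := by
    rw [Algebra.TensorProduct.one_tmul_add_tmul_one_pow, map_sum,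
      Finset.sum_eq_single_of_mem b (Finset.mem_range.2 (Nat.lt_succ_of_le hbm))]
    · rw [map_nsmul, map_tmul, hproj, hproj, if_pos rfl, if_pos rfl, Nat.cast_smul_eq_nsmul]
    · intro k _ hkb
      rw [map_nsmul, map_tmul, hproj b k, if_neg (Ne.symm hkb), tmul_zero, smul_zero]
  intro h
  rw [h, map_zero] at hisolate
  exact smul_ne_zero hchoose (tmul_ne_zero ha hb) hisolate.symm

attribute [local instance] MvPolynomial.gradedAlgebra

theorem stmt_9_general (n₁ n₂ r : ℕ)
    (I : Ideal (MvPolynomial (Fin 2) (ZMod 2)))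
    (hI : I = Ideal.span {X 0 ^ (n₁ + 1), X 1 * (X 0 + X 1) ^ n₂})
    (hy : (X 0 : MvPolynomial (Fin 2) (ZMod 2)) * X 1 ^ (n₁ + n₂ - 1) ∉ I)
    (hr : n₁ + n₂ ≤ 2 ^ r - 1) (hr' : 2 ^ r - 1 ≤ 2 * (n₁ + n₂) - 2) :
    ((1 : MvPolynomial (Fin 2) (ZMod 2) ⧸ I) ⊗ₜ[ZMod 2] (Ideal.Quotient.mk I (X 1))
        + (Ideal.Quotient.mk I (X 1)) ⊗ₜ[ZMod 2] 1) ^ (2 ^ r - 1) ≠ 0 := by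
  have hIh : I.IsHomogeneous (homogeneousSubmodule (Fin 2) (ZMod 2)) := by
    rw [hI]
    refine Ideal.homogeneous_span _ _ ?_
    rintro x (rfl | rfl)
    · exact ⟨n₁ + 1, isHomogeneous_X_pow 0 (n₁ + 1)⟩
    · exact ⟨1 + 1 * n₂,
        (isHomogeneous_X _ 1).mul (((isHomogeneous_X _ 0).add (isHomogeneous_X _ 1)).pow n₂)⟩
  have hb : Ideal.Quotient.mk I (X 1) ^ (n₁ + n₂ - 1) ≠ 0 := fun h => hy <|
    I.mul_mem_left _ (by rwa [← map_pow, Ideal.Quotient.eq_zero_iff_mem] at h)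
  have ha : Ideal.Quotient.mk I (X 1) ^ (2 ^ r - 1 - (n₁ + n₂ - 1)) ≠ 0 :=
    fun h => hb (pow_eq_zero_of_le (by omega) h)
  have hchoose : ((2 ^ r - 1).choose (n₁ + n₂ - 1) : ZMod 2) = 1 := by
    rw [← ZMod.natCast_mod, Nat.choose_two_pow_sub_one_mod_two (by omega), Nat.cast_one]
  exact hIh.one_tmul_add_tmul_one_pow_ne_zero _ (isHomogeneous_X _ 1) (by omega)
    (by simp [hchoose]) ha hb

theorem stmt_9 (n₁ n₂ r : ℕ) (h₁ : 1 ≤ n₁) (h₂ : 1 ≤ n₂)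
    (I : Ideal (MvPolynomial (Fin 2) (ZMod 2)))
    (hI : I = Ideal.span {X 0 ^ (n₁ + 1), X 1 * (X 0 + X 1) ^ n₂})
    (hy : (X 0 : MvPolynomial (Fin 2) (ZMod 2)) * X 1 ^ (n₁ + n₂ - 1) ∉ I)
    (hr : n₁ + n₂ ≤ 2 ^ r - 1) (hr' : 2 ^ r - 1 ≤ 2 * (n₁ + n₂) - 2) :
    ((1 : MvPolynomial (Fin 2) (ZMod 2) ⧸ I) ⊗ₜ[ZMod 2] (Ideal.Quotient.mk I (X 1))
        + (Ideal.Quotient.mk I (X 1)) ⊗ₜ[ZMod 2] 1) ^ (2 ^ r - 1) ≠ 0 :=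
  stmt_9_general n₁ n₂ r I hI hy hr hr'
end

section
/- Let R = (ℤ/2)[y₁,y₂,y₃,y₄]/I where I is the ideal generated by y₁², y₂·(y₁+y₂), y₃·(y₂+y₃) and y₄·(y₁+y₃+y₄), and write ȳ_j for the image of y_j in R. Then in the tensor product R ⊗_{ℤ/2} R one has (1 ⊗ ȳ₂ + ȳ₂ ⊗ 1) · (1 ⊗ ȳ₃ + ȳ₃ ⊗ 1)^{3} · (1 ⊗ ȳ₄ + ȳ₄ ⊗ 1)^{3} ≠ 0. -/
/-!
The relations rewrite each `yᵢ²` into square-free terms, so `R` has the square-free monomials as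
a basis and `ȳ₁ȳ₂ȳ₃ȳ₄` spans its top degree. Let `τ : R → 𝔽₂` read off the coefficient of
`ȳ₁ȳ₂ȳ₃ȳ₄`. The product is detected by the pairing `a ⊗ b ↦ τ a · τ (ȳ₂ b)`: expanding the
product binomially, its value is a finite sum of values of `τ` on monomials, which equals `1`
(in normal form, only the summand `ȳ₁ȳ₂ȳ₃ȳ₄ ⊗ ȳ₁ȳ₃ȳ₄` pairs nontrivially).
-/

open MvPolynomial TensorProduct

section

variable {K A M : Type*} [CommRing K] [CommRing A] [Algebra K A] [AddCommGroup M] [Module K M]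

theorem LinearMap.map_eq_zero_of_mem_ideal_span (L : A →ₗ[K] M) {s : Set A}
    (h : ∀ a, ∀ g ∈ s, L (a * g) = 0) {x : A} (hx : x ∈ Ideal.span s) : L x = 0 := by
  suffices ∀ a, L (a * x) = 0 by simpa using this 1
  induction hx using Submodule.span_induction with
  | mem g hg => exact fun a => h a g hg
  | zero => simp
  | add y z _ _ hy hz => intro a; rw [mul_add, map_add, hy, hz, add_zero]
  | smul b y _ hy => intro a; rw [smul_eq_mul, ← mul_assoc]; exact hy _

def Ideal.Quotient.liftₗ (I : Ideal A) (L : A →ₗ[K] M) (hL : ∀ a ∈ I, L a = 0) :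
    (A ⧸ I) →ₗ[K] M :=
  (Submodule.liftQ (I.restrictScalars K) L hL).comp
    (Submodule.Quotient.restrictScalarsEquiv K I).symm.toLinearMap

@[simp]
theorem Ideal.Quotient.liftₗ_mk (I : Ideal A) (L : A →ₗ[K] M) (hL : ∀ a ∈ I, L a = 0) (a : A) :
    Ideal.Quotient.liftₗ I L hL (Ideal.Quotient.mk I a) = L a := rfl

theorem one_tmul_add_tmul_one_pow (x : A) (n : ℕ) :
    (1 ⊗ₜ[K] x + x ⊗ₜ[K] 1) ^ n =
      ∑ m ∈ Finset.range (n + 1), n.choose m • ((x ^ m) ⊗ₜ[K] (x ^ (n - m))) := by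
  rw [add_comm, add_pow]
  refine Finset.sum_congr rfl fun m _ => ?_
  rw [Algebra.TensorProduct.tmul_pow, Algebra.TensorProduct.tmul_pow, one_pow, one_pow,
    Algebra.TensorProduct.tmul_mul_tmul, mul_one, one_mul, ← nsmul_eq_mul']

theorem mul'_comp_map_one_tmul_add_tmul_one_pow (f g : A →ₗ[K] K) (x y z : A) (p q r : ℕ) :
    (LinearMap.mul' K K ∘ₗ map f g)
        ((1 ⊗ₜ x + x ⊗ₜ 1) ^ p * (1 ⊗ₜ y + y ⊗ₜ 1) ^ q * (1 ⊗ₜ z + z ⊗ₜ 1) ^ r) =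
      ∑ i ∈ Finset.range (p + 1), ∑ j ∈ Finset.range (q + 1), ∑ k ∈ Finset.range (r + 1),
        (p.choose i * q.choose j * r.choose k : K) *
          (f (x ^ i * y ^ j * z ^ k) * g (x ^ (p - i) * y ^ (q - j) * z ^ (r - k))) := by
  rw [one_tmul_add_tmul_one_pow, one_tmul_add_tmul_one_pow, one_tmul_add_tmul_one_pow,
    Finset.sum_mul_sum]
  simp only [Finset.sum_mul]
  simp only [Finset.mul_sum, map_sum]
  refine Finset.sum_congr rfl fun i _ => Finset.sum_congr rfl fun j _ =>
    Finset.sum_congr rfl fun k _ => ?_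
  simp only [smul_mul_smul_comm, Algebra.TensorProduct.tmul_mul_tmul]
  simp only [LinearMap.comp_apply, map_nsmul, map_tmul, LinearMap.mul'_apply]
  simp only [nsmul_eq_mul, Nat.cast_mul]

end

noncomputable def exps : ℕ × ℕ × ℕ × ℕ → Fin 4 →₀ ℕ
  | (a, b, c, d) => Finsupp.equivFunOnFinite.symm ![a, b, c, d]

@[simp]
theorem exps_apply (a b c d : ℕ) (i : Fin 4) : exps (a, b, c, d) i = ![a, b, c, d] i := rfl

@[simp]
theorem exps_sub (a b c d : ℕ) (n : Fin 4 →₀ ℕ) :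
    exps (a, b, c, d) - n = exps (a - n 0, b - n 1, c - n 2, d - n 3) := by
  ext i; fin_cases i <;> rfl

theorem exps_injective : Function.Injective exps := by
  rintro ⟨a, b, c, d⟩ ⟨a', b', c', d'⟩ h
  have := fun i => DFunLike.congr_fun h i
  simpa using And.intro (this 0) (And.intro (this 1) (And.intro (this 2) (this 3)))

theorem X_pow_mul_X_pow_mul_X_pow_eq_monomial (b c d : ℕ) :
    (X 1 ^ b * X 2 ^ c * X 3 ^ d : MvPolynomial (Fin 4) (ZMod 2)) =
      monomial (exps (0, b, c, d)) 1 := by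
  simp only [X_pow_eq_monomial, monomial_mul, one_mul]
  refine congrArg (monomial · 1) (Finsupp.ext fun i => ?_)
  fin_cases i <;> simp

/-- The exponents (of `y₁, …, y₄`) of the degree-4 monomials whose square-free normal form
contains `y₁y₂y₃y₄`. -/
def topMonomials : Finset (ℕ × ℕ × ℕ × ℕ) :=
  {(0, 0, 1, 3), (0, 0, 3, 1), (0, 1, 0, 3), (0, 1, 2, 1), (0, 2, 0, 2), (0, 2, 1, 1),
    (1, 0, 0, 3), (1, 0, 1, 2), (1, 0, 2, 1), (1, 1, 0, 2), (1, 1, 1, 1)}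

noncomputable def topCoeff : MvPolynomial (Fin 4) (ZMod 2) →ₗ[ZMod 2] ZMod 2 :=
  ∑ t ∈ topMonomials, lcoeff (ZMod 2) (exps t)

theorem topCoeff_monomial (t : ℕ × ℕ × ℕ × ℕ) :
    topCoeff (monomial (exps t) 1) = if t ∈ topMonomials then 1 else 0 := by
  simp only [topCoeff, LinearMap.sum_apply, lcoeff_apply, coeff_monomial,
    exps_injective.eq_iff, Finset.sum_ite_eq]

theorem topCoeff_mul_eq_zero (p : MvPolynomial (Fin 4) (ZMod 2)) :
    ∀ g ∈ ({X 0 ^ 2, X 1 * (X 0 + X 1), X 2 * (X 1 + X 2), X 3 * (X 0 + X 2 + X 3)} :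
      Set (MvPolynomial (Fin 4) (ZMod 2))), topCoeff (p * g) = 0 := by
  rintro g (rfl | rfl | rfl | rfl) <;>
    simp [topCoeff, topMonomials, pow_two, mul_add, ← mul_assoc, coeff_mul_X'] <;>
    ring_nf <;> reduce_mod_char

theorem stmt_18 (I : Ideal (MvPolynomial (Fin 4) (ZMod 2)))
    (hI : I = Ideal.span {X 0 ^ 2, X 1 * (X 0 + X 1), X 2 * (X 1 + X 2), X 3 * (X 0 + X 2 + X 3)}) :
    ((1 : MvPolynomial (Fin 4) (ZMod 2) ⧸ I) ⊗ₜ[ZMod 2] (Ideal.Quotient.mk I (X 1))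
        + (Ideal.Quotient.mk I (X 1)) ⊗ₜ[ZMod 2] 1)
      * ((1 : MvPolynomial (Fin 4) (ZMod 2) ⧸ I) ⊗ₜ[ZMod 2] (Ideal.Quotient.mk I (X 2))
        + (Ideal.Quotient.mk I (X 2)) ⊗ₜ[ZMod 2] 1) ^ 3
      * ((1 : MvPolynomial (Fin 4) (ZMod 2) ⧸ I) ⊗ₜ[ZMod 2] (Ideal.Quotient.mk I (X 3))
        + (Ideal.Quotient.mk I (X 3)) ⊗ₜ[ZMod 2] 1) ^ 3 ≠ 0 := by
  set τ := Ideal.Quotient.liftₗ I topCoeff fun _ ha =>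
    topCoeff.map_eq_zero_of_mem_ideal_span (fun p => topCoeff_mul_eq_zero p) (hI ▸ ha)
  have hτ (b c d : ℕ) : τ (Ideal.Quotient.mk I (X 1 ^ b * X 2 ^ c * X 3 ^ d)) =
      if (0, b, c, d) ∈ topMonomials then 1 else 0 := by
    rw [Ideal.Quotient.liftₗ_mk, X_pow_mul_X_pow_mul_X_pow_eq_monomial, topCoeff_monomial]
  intro h
  have key := congrArg (LinearMap.mul' (ZMod 2) (ZMod 2) ∘ₗ
    map τ (τ ∘ₗ LinearMap.mulLeft (ZMod 2) (Ideal.Quotient.mk I (X 1)))) h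
  rw [← pow_one (_ + Ideal.Quotient.mk I (X 1) ⊗ₜ[ZMod 2] 1), map_zero,
    mul'_comp_map_one_tmul_add_tmul_one_pow] at key
  simp only [LinearMap.comp_apply, LinearMap.mulLeft_apply, ← map_pow, ← map_mul, ← mul_assoc,
    ← pow_succ', hτ] at key
  exact absurd key (by decide)
end
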